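/- For 1<q<p and f,A,F>0 satisfying f^q < A < f^{(p-q)/(p-1)} F^{(q-1)/(p-1)} and ω_q(f^q/A) > ω_p(f^p/F), there exists a unique κ ∈ ((f^q/A)^{1/(q-1)}, 1) such that ω_q(f^q/(κ^{q-1}A)) = ω_p(f^p/(κ^{p-1}F)). -/

import Mathlib

open Real Set

/-!
Write `z` for the common value of `ω_q` and `ω_p`. The equation says `H_q(z) κ^(q-1) = f^q/A`
and `H_p(z) κ^(p-1) = f^p/F`; with `ℓ_r = log H_r / (r-1)` and `t = log κ` these become the
linear equations `ℓ_q(z) + t = log (f^q/A) / (q-1)` and `ℓ_p(z) + t = log (f^p/F) / (p-1)`.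
Eliminating `t` leaves `ℓ_p(z) - ℓ_q(z) = const`. Since `H_r(z) = z^(r-1) (r - (r-1) z)`, the
`log z` parts cancel and `ℓ_p - ℓ_q = log (p - (p-1) z) / (p-1) - log (q - (q-1) z) / (q-1)`,
which is strictly decreasing on `[1, p/(p-1))`: this gives uniqueness. It vanishes at `z = 1`,
and the hypotheses on `A` and on `ω_q(f^q/A) > ω_p(f^p/F)` put the constant strictly between its
values at `1` and at `ω_p(f^p/F)`, so the intermediate value theorem gives existence.
-/

noncomputable def H (r z : ℝ) : ℝ := r * z ^ (r - 1) - (r - 1) * z ^ r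

lemma div_sub_one_lt_div_sub_one {p q : ℝ} (hq : 1 < q) (hpq : q < p) :
    p / (p - 1) < q / (q - 1) := by
  rw [div_lt_div_iff₀ (by linarith) (by linarith)]
  nlinarith

section H

variable {r z : ℝ}

@[simp] lemma H_one (r : ℝ) : H r 1 = 1 := by simp [H]

lemma H_eq_rpow_mul (hz : 0 < z) : H r z = z ^ (r - 1) * (r - (r - 1) * z) := by
  rw [H, rpow_sub_one hz.ne']
  field_simp

lemma sub_mul_pos_iff_lt_div (hr : 1 < r) : 0 < r - (r - 1) * z ↔ z < r / (r - 1) := by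
  rw [lt_div_iff₀ (by linarith), sub_pos, mul_comm]

lemma H_pos (hr : 1 < r) (hz : 0 < z) (hzr : z < r / (r - 1)) : 0 < H r z := by
  rw [H_eq_rpow_mul hz]
  exact mul_pos (rpow_pos_of_pos hz _) ((sub_mul_pos_iff_lt_div hr).2 hzr)

lemma H_div_sub_one (hr : 1 < r) : H r (r / (r - 1)) = 0 := by
  rw [H_eq_rpow_mul (div_pos (by linarith) (by linarith)), mul_div_cancel₀ _ (by linarith),
    sub_self, mul_zero]

lemma hasDerivAt_H (hz : 0 < z) : HasDerivAt (H r) (r * (r - 1) * z ^ (r - 2) * (1 - z)) z := by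
  have h := ((hasDerivAt_rpow_const (p := r - 1) (Or.inl hz.ne')).const_mul r).sub
    ((hasDerivAt_rpow_const (p := r) (Or.inl hz.ne')).const_mul (r - 1))
  have e : z ^ (r - 1) = z ^ (r - 2) * z := by rw [← rpow_add_one hz.ne']; ring_nf
  refine HasDerivAt.congr_deriv (f := H r) h ?_
  rw [show r - 1 - 1 = r - 2 by ring, e]
  ring

lemma strictAntiOn_H (hr : 1 < r) : StrictAntiOn (H r) (Ici 1) := by
  refine strictAntiOn_of_deriv_neg (convex_Ici 1)
    (fun z hz => (hasDerivAt_H (zero_lt_one.trans_le hz)).continuousAt.continuousWithinAt)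
    fun z hz => ?_
  rw [interior_Ici, mem_Ioi] at hz
  have hz0 : 0 < z := zero_lt_one.trans hz
  rw [(hasDerivAt_H hz0).deriv]
  exact mul_neg_of_pos_of_neg
    (mul_pos (mul_pos (by linarith) (by linarith)) (rpow_pos_of_pos hz0 _)) (by linarith)

end H

noncomputable def ℓ (r z : ℝ) : ℝ := log (H r z) / (r - 1)

section ℓ

variable {r z κ b : ℝ}

@[simp] lemma ℓ_one (r : ℝ) : ℓ r 1 = 0 := by simp [ℓ]

lemma ℓ_eq_log_add (hr : 1 < r) (hz : 0 < z) (hzr : z < r / (r - 1)) :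
    ℓ r z = log z + log (r - (r - 1) * z) / (r - 1) := by
  rw [ℓ, H_eq_rpow_mul hz, log_mul (rpow_pos_of_pos hz _).ne'
    ((sub_mul_pos_iff_lt_div hr).2 hzr).ne', log_rpow hz]
  field_simp [show r - 1 ≠ 0 by linarith]

lemma continuousOn_ℓ (hr : 1 < r) : ContinuousOn (ℓ r) (Ico 1 (r / (r - 1))) :=
  (ContinuousOn.log
    (fun _ hz => (hasDerivAt_H (zero_lt_one.trans_le hz.1)).continuousAt.continuousWithinAt)
    fun _ hz => (H_pos hr (zero_lt_one.trans_le hz.1) hz.2).ne').div_const _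

lemma strictAntiOn_ℓ (hr : 1 < r) : StrictAntiOn (ℓ r) (Ico 1 (r / (r - 1))) :=
  fun _ ha _ hb hab => div_lt_div_of_pos_right
    (log_lt_log (H_pos hr (zero_lt_one.trans_le hb.1) hb.2) (strictAntiOn_H hr ha.1 hb.1 hab))
    (by linarith)

lemma H_eq_div_rpow_iff (hr : 1 < r) (hz : 0 < z) (hzr : z < r / (r - 1)) (hκ : 0 < κ)
    (hb : 0 < b) : H r z = b / κ ^ (r - 1) ↔ ℓ r z + log κ = log b / (r - 1) := by
  have hr1 : r - 1 ≠ 0 := by linarith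
  rw [← log_injOn_pos.eq_iff (H_pos hr hz hzr) (div_pos hb (rpow_pos_of_pos hκ _)),
    log_div hb.ne' (rpow_pos_of_pos hκ _).ne', log_rpow hκ, ℓ, eq_div_iff hr1]
  constructor <;> intro h
  · field_simp
    linarith
  · field_simp at h
    linarith

lemma div_rpow_mem_Ioc (hr : 1 < r) (hb : 0 < b) (hκ : 0 < κ) (h : log b / (r - 1) < log κ) :
    b / κ ^ (r - 1) ∈ Ioc 0 1 := by
  refine ⟨div_pos hb (rpow_pos_of_pos hκ _), div_le_one_of_le₀ ?_ (rpow_pos_of_pos hκ _).le⟩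
  rw [← exp_log hb, ← exp_log (rpow_pos_of_pos hκ _), log_rpow hκ, exp_le_exp]
  rw [div_lt_iff₀ (by linarith)] at h
  linarith

lemma hasDerivAt_log_sub_mul_div (hr : 1 < r) (hz : z < r / (r - 1)) :
    HasDerivAt (fun z => log (r - (r - 1) * z) / (r - 1)) (-1 / (r - (r - 1) * z)) z := by
  have hpos := (sub_mul_pos_iff_lt_div hr).2 hz
  refine ((((hasDerivAt_id z).const_mul (r - 1)).const_sub r).log hpos.ne').div_const _
    |>.congr_deriv ?_
  simp only [id]
  field_simp [show r - 1 ≠ 0 by linarith]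

lemma strictAntiOn_log_sub_mul_div_sub {p q : ℝ} (hq : 1 < q) (hpq : q < p) :
    StrictAntiOn (fun z => log (p - (p - 1) * z) / (p - 1) - log (q - (q - 1) * z) / (q - 1))
      (Ico 1 (p / (p - 1))) := by
  have hp : 1 < p := hq.trans hpq
  have hd : ∀ z, z < p / (p - 1) → HasDerivAt
      (fun z => log (p - (p - 1) * z) / (p - 1) - log (q - (q - 1) * z) / (q - 1))
      (-1 / (p - (p - 1) * z) - -1 / (q - (q - 1) * z)) z := fun z hz =>
    (hasDerivAt_log_sub_mul_div hp hz).sub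
      (hasDerivAt_log_sub_mul_div hq (hz.trans (div_sub_one_lt_div_sub_one hq hpq)))
  refine strictAntiOn_of_deriv_neg (convex_Ico _ _)
    (fun z hz => (hd z hz.2).continuousAt.continuousWithinAt) fun z hz => ?_
  rw [interior_Ico] at hz
  rw [(hd z hz.2).deriv, neg_div, neg_div]
  have hP := (sub_mul_pos_iff_lt_div hp).2 hz.2
  have hPQ : p - (p - 1) * z < q - (q - 1) * z := by nlinarith [hz.1]
  linarith [one_div_lt_one_div_of_lt hP hPQ]

lemma strictAntiOn_ℓ_sub_ℓ {p q : ℝ} (hq : 1 < q) (hpq : q < p) :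
    StrictAntiOn (fun z => ℓ p z - ℓ q z) (Ico 1 (p / (p - 1))) := by
  have hℓ : ∀ z ∈ Ico 1 (p / (p - 1)), ℓ p z - ℓ q z =
      log (p - (p - 1) * z) / (p - 1) - log (q - (q - 1) * z) / (q - 1) := fun z hz => by
    have hz0 : 0 < z := zero_lt_one.trans_le hz.1
    rw [ℓ_eq_log_add (hq.trans hpq) hz0 hz.2,
      ℓ_eq_log_add hq hz0 (hz.2.trans (div_sub_one_lt_div_sub_one hq hpq))]
    ring
  intro a ha b hb hab
  simp only [hℓ a ha, hℓ b hb]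
  exact strictAntiOn_log_sub_mul_div_sub hq hpq ha hb hab

end ℓ

/-- `ω` is the paper's `ω_r`: the inverse of `H_r : [1, r/(r-1)] → [0, 1]`. -/
def IsHInv (r : ℝ) (ω : ℝ → ℝ) : Prop :=
  ∀ s ∈ Icc (0 : ℝ) 1, ω s ∈ Icc 1 (r / (r - 1)) ∧ H r (ω s) = s

namespace IsHInv

variable {r s z : ℝ} {ω : ℝ → ℝ}

lemma eq_iff (hr : 1 < r) (hω : IsHInv r ω) (hs : s ∈ Icc 0 1) (hz : z ∈ Icc 1 (r / (r - 1))) :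
    ω s = z ↔ H r z = s := by
  obtain ⟨hωs, hHs⟩ := hω s hs
  exact ⟨fun h => h ▸ hHs, fun h => (strictAntiOn_H hr).injOn hωs.1 hz.1 (hHs.trans h.symm)⟩

lemma mem_Ico (hr : 1 < r) (hω : IsHInv r ω) (hs : s ∈ Ioc 0 1) : ω s ∈ Ico 1 (r / (r - 1)) := by
  obtain ⟨hωs, hHs⟩ := hω s (Ioc_subset_Icc_self hs)
  refine ⟨hωs.1, hωs.2.lt_of_ne fun h => ?_⟩
  rw [h, H_div_sub_one hr] at hHs
  exact hs.1.ne hHs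

lemma apply_div_rpow_eq_iff {κ b : ℝ} (hr : 1 < r) (hω : IsHInv r ω) (hb : 0 < b) (hκ : 0 < κ)
    (hs : b / κ ^ (r - 1) ≤ 1) (hz : z ∈ Ico 1 (r / (r - 1))) :
    ω (b / κ ^ (r - 1)) = z ↔ ℓ r z + log κ = log b / (r - 1) :=
  (hω.eq_iff hr ⟨(div_pos hb (rpow_pos_of_pos hκ _)).le, hs⟩ (Ico_subset_Icc_self hz)).trans
    (H_eq_div_rpow_iff hr (zero_lt_one.trans_le hz.1) hz.2 hκ hb)

end IsHInv

section Solution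

variable {p q b c : ℝ} {ωp ωq : ℝ → ℝ}

lemma omega_eq_omega_iff (hq : 1 < q) (hpq : q < p) (hωp : IsHInv p ωp) (hωq : IsHInv q ωq)
    (hb : 0 < b) (hc : 0 < c) (hcb : log c / (p - 1) < log b / (q - 1)) (κ : ℝ) (hκ : 0 < κ)
    (hκb : log b / (q - 1) < log κ) :
    ωq (b / κ ^ (q - 1)) = ωp (c / κ ^ (p - 1)) ↔ ∃ z ∈ Ico 1 (p / (p - 1)),
      ℓ q z + log κ = log b / (q - 1) ∧ ℓ p z + log κ = log c / (p - 1) := by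
  have hp : 1 < p := hq.trans hpq
  have hsq := div_rpow_mem_Ioc hq hb hκ hκb
  have hsp := div_rpow_mem_Ioc hp hc hκ (hcb.trans hκb)
  have hsub : Ico 1 (p / (p - 1)) ⊆ Ico 1 (q / (q - 1)) :=
    Ico_subset_Ico_right (div_sub_one_lt_div_sub_one hq hpq).le
  constructor
  · intro h
    have hz := hωp.mem_Ico hp hsp
    rw [← h] at hz
    exact ⟨_, hz, (hωq.apply_div_rpow_eq_iff hq hb hκ hsq.2 (hsub hz)).1 rfl,
      (hωp.apply_div_rpow_eq_iff hp hc hκ hsp.2 hz).1 h.symm⟩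
  · rintro ⟨z, hz, hzq, hzp⟩
    rw [(hωq.apply_div_rpow_eq_iff hq hb hκ hsq.2 (hsub hz)).2 hzq,
      (hωp.apply_div_rpow_eq_iff hp hc hκ hsp.2 hz).2 hzp]

lemma exists_ℓ_add_log_eq (hq : 1 < q) (hpq : q < p) (hωp : IsHInv p ωp) (hωq : IsHInv q ωq)
    (hb : 0 < b) (hb1 : b < 1) (hc : 0 < c) (hcb : log c / (p - 1) < log b / (q - 1))
    (hω : ωp c < ωq b) :
    ∃ z ∈ Ico 1 (p / (p - 1)), ∃ t ∈ Ioo (log b / (q - 1)) 0,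
      ℓ q z + t = log b / (q - 1) ∧ ℓ p z + t = log c / (p - 1) := by
  have hp : 1 < p := hq.trans hpq
  have hpq' := div_sub_one_lt_div_sub_one hq hpq
  have hbq : log b / (q - 1) < 0 := div_neg_of_neg_of_pos (log_neg hb hb1) (by linarith)
  have hc1 : c < 1 := (log_neg_iff hc).1 (neg_of_div_neg_left (hcb.trans hbq) (by linarith))
  have hz₁ := hωp.mem_Ico hp ⟨hc, hc1.le⟩
  have hzb := hωq.mem_Ico hq ⟨hb, hb1.le⟩
  have hℓp : ℓ p (ωp c) = log c / (p - 1) := by rw [ℓ, (hωp c ⟨hc.le, hc1.le⟩).2]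
  have hℓq : log b / (q - 1) < ℓ q (ωp c) := by
    calc log b / (q - 1) = ℓ q (ωq b) := by rw [ℓ, (hωq b ⟨hb.le, hb1.le⟩).2]
      _ < ℓ q (ωp c) := strictAntiOn_ℓ hq ⟨hz₁.1, hz₁.2.trans hpq'⟩ hzb hω
  have hcont : ContinuousOn (fun z => ℓ p z - ℓ q z) (Icc 1 (ωp c)) :=
    ((continuousOn_ℓ hp).mono fun z hz => ⟨hz.1, hz.2.trans_lt hz₁.2⟩).sub
      ((continuousOn_ℓ hq).mono fun z hz => ⟨hz.1, (hz.2.trans_lt hz₁.2).trans hpq'⟩)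
  obtain ⟨z, ⟨hz1, hzc⟩, hz⟩ := intermediate_value_Ioo' hz₁.1 hcont
    (show log c / (p - 1) - log b / (q - 1) ∈ Ioo _ _ from
      ⟨by simp only [hℓp]; linarith, by simp only [ℓ_one]; linarith⟩)
  have hzp : z ∈ Ico 1 (p / (p - 1)) := ⟨hz1.le, hzc.trans hz₁.2⟩
  have hzq : z ∈ Ico 1 (q / (q - 1)) := ⟨hz1.le, hzp.2.trans hpq'⟩
  have hℓqz : ℓ q z < 0 := ℓ_one q ▸ strictAntiOn_ℓ hq (left_mem_Ico.2 (hz1.trans hzq.2)) hzq hz1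
  have hℓpz : ℓ p (ωp c) < ℓ p z := strictAntiOn_ℓ hp hzp hz₁ hzc
  simp only at hz
  exact ⟨z, hzp, log b / (q - 1) - ℓ q z, ⟨by linarith, by linarith⟩, by ring, by linarith⟩

theorem exists_unique_omega_eq (hq : 1 < q) (hpq : q < p) (hωp : IsHInv p ωp)
    (hωq : IsHInv q ωq) (hb : 0 < b) (hb1 : b < 1) (hc : 0 < c)
    (hcb : log c / (p - 1) < log b / (q - 1)) (hω : ωp c < ωq b) :
    ∃! κ, κ ∈ Ioo (b ^ (1 / (q - 1))) 1 ∧ ωq (b / κ ^ (q - 1)) = ωp (c / κ ^ (p - 1)) := by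
  rw [rpow_def_of_pos hb, mul_one_div]
  obtain ⟨z, hz, t, ⟨hbt, ht0⟩, hzq, hzp⟩ := exists_ℓ_add_log_eq hq hpq hωp hωq hb hb1 hc hcb hω
  have hsol := omega_eq_omega_iff hq hpq hωp hωq hb hc hcb
  refine ⟨exp t, ⟨⟨exp_lt_exp.2 hbt, exp_lt_one_iff.2 ht0⟩,
    (hsol _ (exp_pos t) (by rwa [log_exp])).2 ⟨z, hz, by rwa [log_exp], by rwa [log_exp]⟩⟩, ?_⟩
  rintro κ ⟨hκ, hκeq⟩
  have hκ0 : 0 < κ := (exp_pos _).trans hκ.1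
  obtain ⟨w, hw, hwq, hwp⟩ := (hsol κ hκ0 ((lt_log_iff_exp_lt hκ0).2 hκ.1)).1 hκeq
  have hwz : w = z := (strictAntiOn_ℓ_sub_ℓ hq hpq).injOn hw hz (by linarith)
  subst hwz
  rw [← exp_log hκ0]
  congr 1
  linarith

end Solution

lemma log_div_rpow_lt {p q f A F : ℝ} (hq : 1 < q) (hpq : q < p) (hf : 0 < f) (hA : 0 < A)
    (hF : 0 < F) (h : A < f ^ ((p - q) / (p - 1)) * F ^ ((q - 1) / (p - 1))) :
    log (f ^ p / F) / (p - 1) < log (f ^ q / A) / (q - 1) := by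
  have hp1 : 0 < p - 1 := by linarith
  have hlog := log_lt_log hA h
  rw [log_mul (rpow_pos_of_pos hf _).ne' (rpow_pos_of_pos hF _).ne', log_rpow hf, log_rpow hF]
    at hlog
  rw [log_div (rpow_pos_of_pos hf _).ne' hF.ne', log_div (rpow_pos_of_pos hf _).ne' hA.ne',
    log_rpow hf, log_rpow hf, div_lt_div_iff₀ hp1 (by linarith)]
  have := mul_lt_mul_of_pos_left hlog hp1
  field_simp at this
  linarith

/-- For `1 < q < p` and `f, A, F > 0` with `f^q < A < f^((p-q)/(p-1)) F^((q-1)/(p-1))`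
and `ω_q(f^q/A) > ω_p(f^p/F)`, there exists a unique `κ ∈ ((f^q/A)^(1/(q-1)), 1)` with
`ω_q(f^q/(κ^(q-1)A)) = ω_p(f^p/(κ^(p-1)F))`. -/
theorem exists_unique_kappa (p q : ℝ) (hq : 1 < q) (hpq : q < p)
    (ωp ωq : ℝ → ℝ)
    (hωp : ∀ s ∈ Icc (0 : ℝ) 1, ωp s ∈ Icc 1 (p / (p - 1)) ∧
      p * ωp s ^ (p - 1) - (p - 1) * ωp s ^ p = s)
    (hωq : ∀ s ∈ Icc (0 : ℝ) 1, ωq s ∈ Icc 1 (q / (q - 1)) ∧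
      q * ωq s ^ (q - 1) - (q - 1) * ωq s ^ q = s)
    (f A F : ℝ) (hf : 0 < f) (hA : 0 < A) (hF : 0 < F)
    (h1 : f ^ q < A) (h2 : A < f ^ ((p - q) / (p - 1)) * F ^ ((q - 1) / (p - 1)))
    (h3 : ωq (f ^ q / A) > ωp (f ^ p / F)) :
    ∃! κ, κ ∈ Ioo ((f ^ q / A) ^ (1 / (q - 1))) 1 ∧
      ωq (f ^ q / (κ ^ (q - 1) * A)) = ωp (f ^ p / (κ ^ (p - 1) * F)) := by
  have hdiv : ∀ r X κ : ℝ, f ^ r / (κ ^ (r - 1) * X) = f ^ r / X / κ ^ (r - 1) := fun _ _ _ => by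
    rw [div_div, mul_comm]
  simp only [hdiv]
  exact exists_unique_omega_eq hq hpq hωp hωq (div_pos (rpow_pos_of_pos hf q) hA)
    ((div_lt_one hA).2 h1) (div_pos (rpow_pos_of_pos hf p) hF)
    (log_div_rpow_lt hq hpq hf hA hF h2) h3
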